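/- Let γ: I → M be a slant curve with null normal in a 3-dimensional α-para-Kenmotsu manifold M (a normal almost paracontact metric manifold with α ≠ 0 constant and β = 0), with η(γ̇) = c constant and c² ≠ 1. Then α = ± g(N, φγ̇)/(1 − c²), and κ = αc, N = −α(ξ − cγ̇ ± φγ̇), W = (−1/(2α(1 − c²)))(ξ − cγ̇ ∓ φγ̇). In particular, if γ is a Legendre curve (c = 0), then κ = 0, N = −α(ξ ± φγ̇) and W = (−1/(2α))(ξ ∓ φγ̇). -/

import Mathlib

/-!
Along the curve, `γ̇`, `ξ − cγ̇` and `φγ̇` are mutually orthogonal with squared lengths `1`,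
`1 − c²` and `c² − 1`, so for `c² ≠ 1` they form an orthogonal basis and every vector is
determined by its pairings with them. Differentiating the constants `g(γ̇, γ̇) = 1` and
`η(γ̇) = c` gives `g(N, γ̇) = 0` and `g(N, ξ) = −α(1 − c²)`; differentiating the latter once
more gives `κ = αc`. Nullity of `N` then forces `g(N, φγ̇) = ±α(1 − c²)`, which determines `N`,
and the conditions `g(γ̇, W) = g(W, W) = 0`, `g(N, W) = 1` determine `W` in the same way.
-/

/-- The data, along a curve `γ : I → M`, of a 3-dimensional almost paracontact
metric manifold `(M, φ, ξ, η, g)`: the pullback tangent bundle is trivialized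
over a real vector space `V`; `g t`, `phi t`, `xi t` are the metric, the
structure tensor and the Reeb field at the point `γ t`, and `T t = γ̇(t)` is
the velocity of the curve.  The 1-form `η` is recovered as `η(v) = g v ξ`.
The axioms record: `η(ξ) = 1`, `φξ = 0`, `φ² = Id − η ⊗ ξ`,
`g(φv, φw) = −g(v,w) + η(v)η(w)`, symmetry of `g`, and that `g` has
signature `(2,1)` (an orthonormal basis with signs `(+,+,−)`). -/
structure APCMCurve (V : Type*) [AddCommGroup V] [Module ℝ V] where
  g : ℝ → V →ₗ[ℝ] V →ₗ[ℝ] ℝ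
  phi : ℝ → V →ₗ[ℝ] V
  xi : ℝ → V
  T : ℝ → V
  g_symm : ∀ t v w, g t v w = g t w v
  xi_unit : ∀ t, g t (xi t) (xi t) = 1
  phi_xi : ∀ t, phi t (xi t) = 0
  phi_sq : ∀ t v, phi t (phi t v) = v - g t v (xi t) • xi t
  compat : ∀ t v w, g t (phi t v) (phi t w) = -(g t v w) + g t v (xi t) * g t w (xi t)
  signature : ∀ t, ∃ e : Module.Basis (Fin 3) ℝ V,
    g t (e 0) (e 0) = 1 ∧ g t (e 1) (e 1) = 1 ∧ g t (e 2) (e 2) = -1 ∧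
    g t (e 0) (e 1) = 0 ∧ g t (e 0) (e 2) = 0 ∧ g t (e 1) (e 2) = 0

/-- The data, along a curve `γ`, of a 3-dimensional *normal* almost paracontact
metric manifold: in addition to `APCMCurve`, `D` is the covariant derivative
along `γ` (induced by the Levi-Civita connection `∇` of `g`), and
`a = α ∘ γ`, `b = β ∘ γ` are the compositions with `γ` of the structure
functions `α`, `β` of the normal structure (those with
`2α = Trace{X ↦ ∇_X ξ}`, `2β = Trace{X ↦ φ∇_X ξ}`), so that along `γ` one has
`∇_{γ̇} ξ = α(γ̇ − η(γ̇)ξ) + βφγ̇` (field `D_xi`) and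
`(∇_{γ̇} φ)A = β(g(γ̇,A)ξ − η(A)γ̇) + α(g(φγ̇,A)ξ − η(A)φγ̇)` for every vector
field `A` along `γ` (field `D_phi`).  `D` is additive, satisfies the Leibniz
rule and is metric-compatible. -/
structure NAPCMCurve (V : Type*) [AddCommGroup V] [Module ℝ V]
    extends APCMCurve V where
  D : (ℝ → V) → (ℝ → V)
  a : ℝ → ℝ
  b : ℝ → ℝ
  D_add : ∀ A B : ℝ → V, D (fun t => A t + B t) = fun t => D A t + D B t
  D_smul : ∀ (f : ℝ → ℝ) (A : ℝ → V) (t : ℝ), DifferentiableAt ℝ f t →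
    D (fun s => f s • A s) t = deriv f t • A t + f t • D A t
  D_metric : ∀ (A B : ℝ → V) (t : ℝ),
    HasDerivAt (fun s => g s (A s) (B s)) (g t (D A t) (B t) + g t (A t) (D B t)) t
  D_xi : ∀ t, D xi t = a t • (T t - g t (T t) (xi t) • xi t) + b t • phi t (T t)
  D_phi : ∀ (A : ℝ → V) (t : ℝ),
    D (fun s => phi s (A s)) t
      = b t • (g t (T t) (A t) • xi t - g t (A t) (xi t) • T t)
        + a t • (g t (phi t (T t)) (A t) • xi t - g t (A t) (xi t) • phi t (T t))
        + phi t (D A t)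

namespace LinearMap.BilinForm

variable {K V ι : Type*} [Field K] [AddCommGroup V] [Module K V] [FiniteDimensional K V]
  [Fintype ι] {B : LinearMap.BilinForm K V} {v : ι → V}

theorem eq_sum_of_iIsOrtho (hv₁ : B.iIsOrtho v) (hv₂ : ∀ i, B (v i) (v i) ≠ 0)
    (hcard : Fintype.card ι = Module.finrank K V) (w : V) :
    w = ∑ i, (B w (v i) / B (v i) (v i)) • v i := by
  let b :=
    basisOfLinearIndependentOfCardEqFinrank' v (linearIndependent_of_iIsOrtho hv₁ hv₂) hcard
  have hb : ⇑b = v := coe_basisOfLinearIndependentOfCardEqFinrank' _ _ _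
  have hrepr (i : ι) : b.repr w i = B w (v i) / B (v i) (v i) := by
    rw [eq_div_iff (hv₂ i)]
    conv_rhs => rw [← b.sum_repr w]
    rw [sum_left, Finset.sum_eq_single i]
    · simp [hb]
    · intro j _ hji
      simp [hb, iIsOrtho_def.1 hv₁ j i hji]
    · simp
  conv_lhs => rw [← b.sum_repr w]
  simp only [hrepr, hb]

theorem apply_eq_sum_of_iIsOrtho (hv₁ : B.iIsOrtho v) (hv₂ : ∀ i, B (v i) (v i) ≠ 0)
    (hcard : Fintype.card ι = Module.finrank K V) (u w : V) :
    B u w = ∑ i, B u (v i) * B w (v i) / B (v i) (v i) := by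
  conv_lhs => rw [eq_sum_of_iIsOrtho hv₁ hv₂ hcard w]
  simp only [map_sum, map_smul, smul_eq_mul]
  congr 1 with i
  ring

end LinearMap.BilinForm

namespace APCMCurve

variable {V : Type*} [AddCommGroup V] [Module ℝ V]

theorem finiteDimensional (M : APCMCurve V) : FiniteDimensional ℝ V :=
  Module.Finite.of_basis (M.signature 0).choose

theorem finrank_eq_three (M : APCMCurve V) : Module.finrank ℝ V = 3 := by
  rw [Module.finrank_eq_card_basis (M.signature 0).choose, Fintype.card_fin]

variable (M : APCMCurve V) (t : ℝ)

theorem g_phi_xi (v : V) : M.g t (M.phi t v) (M.xi t) = 0 := by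
  have h := M.phi_sq t (M.phi t v)
  rw [M.phi_sq t v, map_sub, map_smul, M.phi_xi, smul_zero, sub_zero] at h
  have h' := congrArg (M.g t · (M.xi t)) (sub_eq_self.mp h.symm)
  simpa [M.xi_unit] using h'

theorem g_xi_phi (v : V) : M.g t (M.xi t) (M.phi t v) = 0 := by
  rw [M.g_symm, M.g_phi_xi]

theorem g_phi_left (v w : V) : M.g t (M.phi t v) w = -M.g t v (M.phi t w) := by
  have h := M.compat t v (M.phi t w)
  rwa [M.phi_sq, map_sub, map_smul, M.g_phi_xi, M.g_phi_xi, smul_zero, sub_zero, mul_zero,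
    add_zero] at h

theorem g_self_phi (v : V) : M.g t v (M.phi t v) = 0 := by
  linarith [M.g_phi_left t v v, M.g_symm t (M.phi t v) v]

theorem g_phi_self (v : V) : M.g t (M.phi t v) v = 0 := by
  rw [M.g_symm, M.g_self_phi]

def frame (c : ℝ) : Fin 3 → V := ![M.T t, M.xi t - c • M.T t, M.phi t (M.T t)]

@[simp] theorem frame_zero (c : ℝ) : M.frame t c 0 = M.T t := rfl

@[simp] theorem frame_one (c : ℝ) : M.frame t c 1 = M.xi t - c • M.T t := rfl

@[simp] theorem frame_two (c : ℝ) : M.frame t c 2 = M.phi t (M.T t) := rfl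

variable {M t} {c : ℝ}

theorem iIsOrtho_frame (hunit : M.g t (M.T t) (M.T t) = 1)
    (hslant : M.g t (M.T t) (M.xi t) = c) :
    LinearMap.BilinForm.iIsOrtho (M.g t) (M.frame t c) := by
  have hxT : M.g t (M.xi t) (M.T t) = c := by rw [M.g_symm, hslant]
  rw [LinearMap.BilinForm.iIsOrtho_def]
  intro i j hij
  fin_cases i <;> fin_cases j <;>
    simp_all [frame, M.g_phi_xi, M.g_xi_phi, M.g_self_phi, M.g_phi_self]

theorem g_frame_self (hunit : M.g t (M.T t) (M.T t) = 1)
    (hslant : M.g t (M.T t) (M.xi t) = c) :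
    M.g t (M.frame t c 0) (M.frame t c 0) = 1 ∧
    M.g t (M.frame t c 1) (M.frame t c 1) = 1 - c ^ 2 ∧
    M.g t (M.frame t c 2) (M.frame t c 2) = -(1 - c ^ 2) := by
  have hxT : M.g t (M.xi t) (M.T t) = c := by rw [M.g_symm, hslant]
  refine ⟨hunit, ?_, ?_⟩
  · simp [frame, hunit, hslant, hxT, M.xi_unit]
    ring
  · simp [frame, M.compat, hunit, hslant]
    ring

theorem frame_self_ne_zero (hunit : M.g t (M.T t) (M.T t) = 1)
    (hslant : M.g t (M.T t) (M.xi t) = c) (hc : c ^ 2 ≠ 1) (i : Fin 3) :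
    M.g t (M.frame t c i) (M.frame t c i) ≠ 0 := by
  have hε : 1 - c ^ 2 ≠ 0 := sub_ne_zero.mpr hc.symm
  obtain ⟨h0, h1, h2⟩ := g_frame_self hunit hslant
  fin_cases i
  exacts [h0 ▸ one_ne_zero, h1 ▸ hε, h2 ▸ neg_ne_zero.mpr hε]

theorem eq_frame_expansion (hunit : M.g t (M.T t) (M.T t) = 1)
    (hslant : M.g t (M.T t) (M.xi t) = c) (hc : c ^ 2 ≠ 1) (w : V) :
    w = M.g t w (M.T t) • M.T t
      + (M.g t w (M.xi t - c • M.T t) / (1 - c ^ 2)) • (M.xi t - c • M.T t)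
      - (M.g t w (M.phi t (M.T t)) / (1 - c ^ 2)) • M.phi t (M.T t) := by
  have := M.finiteDimensional
  obtain ⟨h0, h1, h2⟩ := g_frame_self hunit hslant
  conv_lhs => rw [LinearMap.BilinForm.eq_sum_of_iIsOrtho (iIsOrtho_frame hunit hslant)
    (frame_self_ne_zero hunit hslant hc) (by rw [M.finrank_eq_three, Fintype.card_fin]) w]
  rw [Fin.sum_univ_three, h0, h1, h2, frame_zero, frame_one, frame_two, div_neg, neg_smul]
  module

theorem g_eq_frame_expansion (hunit : M.g t (M.T t) (M.T t) = 1)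
    (hslant : M.g t (M.T t) (M.xi t) = c) (hc : c ^ 2 ≠ 1) (u w : V) :
    M.g t u w = M.g t u (M.T t) * M.g t w (M.T t)
      + M.g t u (M.xi t - c • M.T t) * M.g t w (M.xi t - c • M.T t) / (1 - c ^ 2)
      - M.g t u (M.phi t (M.T t)) * M.g t w (M.phi t (M.T t)) / (1 - c ^ 2) := by
  have := M.finiteDimensional
  obtain ⟨h0, h1, h2⟩ := g_frame_self hunit hslant
  rw [LinearMap.BilinForm.apply_eq_sum_of_iIsOrtho (iIsOrtho_frame hunit hslant)
    (frame_self_ne_zero hunit hslant hc) (by rw [M.finrank_eq_three, Fintype.card_fin]),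
    Fin.sum_univ_three, h0, h1, h2, frame_zero, frame_one, frame_two, div_neg]
  ring

theorem exists_sign_eq_of_null (hunit : M.g t (M.T t) (M.T t) = 1)
    (hslant : M.g t (M.T t) (M.xi t) = c) (hc : c ^ 2 ≠ 1) {k : ℝ} {n : V}
    (hnT : M.g t n (M.T t) = 0) (hnxi : M.g t n (M.xi t) = -(k * (1 - c ^ 2)))
    (hnull : M.g t n n = 0) :
    ∃ s : ℝ, (s = 1 ∨ s = -1) ∧ M.g t n (M.phi t (M.T t)) = s * (k * (1 - c ^ 2)) ∧
      n = (-k) • (M.xi t - c • M.T t + s • M.phi t (M.T t)) := by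
  have hε : 1 - c ^ 2 ≠ 0 := sub_ne_zero.mpr hc.symm
  have hnX : M.g t n (M.xi t - c • M.T t) = -(k * (1 - c ^ 2)) := by
    simp only [map_sub, map_smul, smul_eq_mul, hnT, hnxi, mul_zero, sub_zero]
  have hsq : M.g t n (M.phi t (M.T t)) ^ 2 = (k * (1 - c ^ 2)) ^ 2 := by
    have h := g_eq_frame_expansion hunit hslant hc n n
    rw [hnull, hnT, hnX] at h
    field_simp at h
    linear_combination h
  obtain ⟨s, hs, hμ⟩ : ∃ s : ℝ, (s = 1 ∨ s = -1) ∧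
      M.g t n (M.phi t (M.T t)) = s * (k * (1 - c ^ 2)) := by
    rcases sq_eq_sq_iff_eq_or_eq_neg.mp hsq with h | h
    exacts [⟨1, .inl rfl, by rw [h, one_mul]⟩, ⟨-1, .inr rfl, by rw [h, neg_one_mul]⟩]
  refine ⟨s, hs, hμ, ?_⟩
  conv_lhs => rw [eq_frame_expansion hunit hslant hc n]
  rw [hnT, hnX, hμ]
  field_simp
  module

theorem eq_of_null_of_g_eq_one (hunit : M.g t (M.T t) (M.T t) = 1)
    (hslant : M.g t (M.T t) (M.xi t) = c) (hc : c ^ 2 ≠ 1) {k s : ℝ} (hs : s = 1 ∨ s = -1)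
    {n w : V} (hn : n = (-k) • (M.xi t - c • M.T t + s • M.phi t (M.T t)))
    (hwT : M.g t w (M.T t) = 0) (hnull : M.g t w w = 0) (hnw : M.g t n w = 1) :
    w = (-1 / (2 * k * (1 - c ^ 2))) • (M.xi t - c • M.T t - s • M.phi t (M.T t)) := by
  have hε : 1 - c ^ 2 ≠ 0 := sub_ne_zero.mpr hc.symm
  have hs2 : s ^ 2 = 1 := by rcases hs with rfl | rfl <;> norm_num
  have hw := eq_frame_expansion hunit hslant hc w
  have hww := g_eq_frame_expansion hunit hslant hc w w
  rw [hwT, zero_smul, zero_add] at hw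
  set ω := M.g t w (M.xi t - c • M.T t)
  set ν := M.g t w (M.phi t (M.T t))
  have hsq : ν ^ 2 = ω ^ 2 := by
    rw [hnull, hwT] at hww
    field_simp at hww
    linear_combination hww
  have hpair : -k * (ω + s * ν) = 1 := by
    rw [M.g_symm, hn] at hnw
    simpa only [map_smul, map_add, smul_eq_mul] using hnw
  have hν : ν = s * ω := by
    have hne : ν + s * ω ≠ 0 := fun h => by
      have : ω + s * ν = 0 := by linear_combination s * h - ω * hs2
      rw [this, mul_zero] at hpair
      exact zero_ne_one hpair
    have : (ν - s * ω) * (ν + s * ω) = 0 := by linear_combination hsq - ω ^ 2 * hs2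
    exact sub_eq_zero.mp ((mul_eq_zero.mp this).resolve_right hne)
  have hk : k ≠ 0 := by rintro rfl; simp at hpair
  have hω : ω = -1 / (2 * k) := by
    rw [hν] at hpair
    field_simp
    linear_combination -hpair - k * ω * hs2
  rw [hw, hν, hω]
  field_simp
  module

end APCMCurve

namespace NAPCMCurve

variable {V : Type*} [AddCommGroup V] [Module ℝ V] (M : NAPCMCurve V)

theorem g_D_add_g_D_eq_zero {A B : ℝ → V} {C : ℝ} (h : ∀ s, M.g s (A s) (B s) = C) (t : ℝ) :
    M.g t (M.D A t) (B t) + M.g t (A t) (M.D B t) = 0 := by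
  refine (M.D_metric A B t).unique ?_
  rw [show (fun s => M.g s (A s) (B s)) = fun _ => C from funext h]
  exact hasDerivAt_const t C

variable {M} {t k c : ℝ}

theorem D_xi_eq_of_paraKenmotsu (ha : M.a t = k) (hb : M.b t = 0) :
    M.D M.xi t = k • (M.T t - M.g t (M.T t) (M.xi t) • M.xi t) := by
  rw [M.D_xi, ha, hb, zero_smul, add_zero]

theorem g_D_T_T (hunit : ∀ s, M.g s (M.T s) (M.T s) = 1) (t : ℝ) :
    M.g t (M.D M.T t) (M.T t) = 0 := by
  have h := M.g_D_add_g_D_eq_zero hunit t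
  rw [M.g_symm t (M.T t)] at h
  linarith

theorem g_D_T_xi (ha : M.a t = k) (hb : M.b t = 0) (hunit : M.g t (M.T t) (M.T t) = 1)
    (hslant : ∀ s, M.g s (M.T s) (M.xi s) = c) :
    M.g t (M.D M.T t) (M.xi t) = -(k * (1 - c ^ 2)) := by
  have h := M.g_D_add_g_D_eq_zero hslant t
  rw [D_xi_eq_of_paraKenmotsu ha hb] at h
  simp only [map_smul, map_sub, smul_eq_mul, hunit, hslant] at h
  linear_combination h

theorem curvature_eq (hk : k ≠ 0) (hc : c ^ 2 ≠ 1) (ha : M.a t = k) (hb : M.b t = 0)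
    (hslant : M.g t (M.T t) (M.xi t) = c) {n : ℝ → V} {κ : ℝ}
    (hnxi : ∀ s, M.g s (n s) (M.xi s) = -(k * (1 - c ^ 2))) (hnT : M.g t (n t) (M.T t) = 0)
    (hκ : M.D n t = κ • n t) :
    κ = k * c := by
  have h := M.g_D_add_g_D_eq_zero hnxi t
  rw [hκ, D_xi_eq_of_paraKenmotsu ha hb, hslant] at h
  simp only [map_smul, map_sub, LinearMap.smul_apply, smul_eq_mul, hnT, hnxi] at h
  refine mul_left_cancel₀ (mul_ne_zero hk (sub_ne_zero.mpr hc.symm)) ?_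
  linear_combination -h

end NAPCMCurve

theorem alpha_para_kenmotsu_null_normal_cartan_general
    {V : Type*} [AddCommGroup V] [Module ℝ V]
    (M : NAPCMCurve V) (k : ℝ) (hk : k ≠ 0)
    (ha : ∀ t, M.a t = k) (hb : ∀ t, M.b t = 0)
    (c : ℝ) (hc : c ^ 2 ≠ 1)
    (hunit : ∀ t, M.g t (M.T t) (M.T t) = 1)
    (hslant : ∀ t, M.g t (M.T t) (M.xi t) = c)
    (hnullnormal : ∀ t, M.g t (M.D M.T t) (M.D M.T t) = 0)
    (N : ℝ → V) (hN : N = M.D M.T)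
    (κ : ℝ → ℝ) (hκ : ∀ t, M.D N t = κ t • N t)
    (W : ℝ → V)
    (hW1 : ∀ t, M.g t (N t) (W t) = 1)
    (hW2 : ∀ t, M.g t (W t) (W t) = 0)
    (hW3 : ∀ t, M.g t (M.T t) (W t) = 0) :
    (∀ t : ℝ, ∃ s : ℝ, (s = 1 ∨ s = -1) ∧
      k = s * (M.g t (N t) (M.phi t (M.T t)) / (1 - c ^ 2)) ∧
      κ t = k * c ∧
      N t = (-k) • (M.xi t - c • M.T t + s • M.phi t (M.T t)) ∧
      W t = (-1 / (2 * k * (1 - c ^ 2)))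
          • (M.xi t - c • M.T t - s • M.phi t (M.T t))) ∧
    (c = 0 → ∀ t : ℝ, ∃ s : ℝ, (s = 1 ∨ s = -1) ∧
      κ t = 0 ∧
      N t = (-k) • (M.xi t + s • M.phi t (M.T t)) ∧
      W t = (-1 / (2 * k)) • (M.xi t - s • M.phi t (M.T t))) := by
  subst hN
  have hNT (t : ℝ) := NAPCMCurve.g_D_T_T hunit t
  have hNxi (t : ℝ) := NAPCMCurve.g_D_T_xi (ha t) (hb t) (hunit t) hslant
  refine (fun general => ⟨general, fun hc0 t => ?legendre⟩) fun t => ?_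
  case legendre =>
    obtain ⟨s, hs, -, hκt, hNt, hWt⟩ := general t
    subst hc0
    exact ⟨s, hs, by simpa using hκt, by simpa using hNt, by simpa using hWt⟩
  obtain ⟨s, hs, hNphi, hNt⟩ :=
    APCMCurve.exists_sign_eq_of_null (hunit t) (hslant t) hc (hNT t) (hNxi t) (hnullnormal t)
  refine ⟨s, hs, ?_, NAPCMCurve.curvature_eq hk hc (ha t) (hb t) (hslant t) hNxi (hNT t) (hκ t),
    hNt, APCMCurve.eq_of_null_of_g_eq_one (hunit t) (hslant t) hc hs hNt
      (by rw [M.g_symm]; exact hW3 t) (hW2 t) (hW1 t)⟩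
  rw [hNphi, mul_div_assoc, mul_div_cancel_right₀ _ (sub_ne_zero.mpr hc.symm)]
  rcases hs with rfl | rfl <;> ring

/-- Let `γ` be a slant curve with null normal in a
3-dimensional α-para-Kenmotsu manifold (`α` a nonzero constant, `β = 0`),
with `η(γ̇) = c` constant, `c² ≠ 1`.  Then `α = ±g(N,φγ̇)/(1−c²)`, and
`κ = αc`, `N = −α(ξ − cγ̇ ± φγ̇)`, `W = (−1/(2α(1−c²)))(ξ − cγ̇ ∓ φγ̇)`.
In particular, if `γ` is a Legendre curve (`c = 0`), then `κ = 0`,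
`N = −α(ξ ± φγ̇)` and `W = (−1/(2α))(ξ ∓ φγ̇)`. -/
theorem alpha_para_kenmotsu_null_normal_cartan
    {V : Type*} [AddCommGroup V] [Module ℝ V]
    (M : NAPCMCurve V) (k : ℝ) (hk : k ≠ 0)
    (ha : ∀ t, M.a t = k) (hb : ∀ t, M.b t = 0)
    (c : ℝ) (hc : c ^ 2 ≠ 1)
    (hunit : ∀ t, M.g t (M.T t) (M.T t) = 1)
    (hslant : ∀ t, M.g t (M.T t) (M.xi t) = c)
    (hnongeo : ∀ t, M.D M.T t ≠ 0)
    (hnullnormal : ∀ t, M.g t (M.D M.T t) (M.D M.T t) = 0)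
    (N : ℝ → V) (hN : N = M.D M.T)
    (κ : ℝ → ℝ) (hκ : ∀ t, M.D N t = κ t • N t)
    (W : ℝ → V)
    (hW1 : ∀ t, M.g t (N t) (W t) = 1)
    (hW2 : ∀ t, M.g t (W t) (W t) = 0)
    (hW3 : ∀ t, M.g t (M.T t) (W t) = 0) :
    (∀ t : ℝ, ∃ s : ℝ, (s = 1 ∨ s = -1) ∧
      k = s * (M.g t (N t) (M.phi t (M.T t)) / (1 - c ^ 2)) ∧
      κ t = k * c ∧
      N t = (-k) • (M.xi t - c • M.T t + s • M.phi t (M.T t)) ∧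
      W t = (-1 / (2 * k * (1 - c ^ 2)))
          • (M.xi t - c • M.T t - s • M.phi t (M.T t))) ∧
    (c = 0 → ∀ t : ℝ, ∃ s : ℝ, (s = 1 ∨ s = -1) ∧
      κ t = 0 ∧
      N t = (-k) • (M.xi t + s • M.phi t (M.T t)) ∧
      W t = (-1 / (2 * k)) • (M.xi t - s • M.phi t (M.T t))) :=
  alpha_para_kenmotsu_null_normal_cartan_general M k hk ha hb c hc hunit hslant hnullnormal N hN κ
    hκ W hW1 hW2 hW3
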